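/- arXiv:2406.19710 — 5 statements merged into one kernel-verified Lean document; each statement's English description precedes it below -/
import Mathlib

section
/- Let m = 2^{k-2}, n = 4m - 1 for k ≥ 3, let O be a 2m-element subset of [n], let X be a family of 2m-1 many m-element subsets of [n]∖O with pairwise intersections of size m/2, let Z be a (2m-1)-element subset of O, let Y be a family of 2m-1 many m-element subsets of Z with pairwise intersections of size m/2, and let δ : X → Y be a bijection. Then the family consisting of O together with the sets X ∪ δ(X) and X ∪ (O ∖ δ(X)) for X ∈ X has exactly n elements, and any two distinct members intersect in exactly m elements. -/
/-!
Every member other than `O` is `X ∪ Y` with `X` outside `O` and `Y ∈ {δ X, O \ δ X}` inside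
`O`; both parts are recovered as `A \ O` and `A ∩ O`, which gives the count `1 + 2 (2m - 1)`,
and two such members meet in `|X₁ ∩ X₂| + |Y₁ ∩ Y₂|`. Complementing inside `O` keeps two
`m`-subsets of the `2m`-set `O` meeting in `m/2` points, so members with `X₁ ≠ X₂` meet in
`m/2 + m/2`; the two members built on the same `X` meet in `X`, and `O` meets a member in its
`O`-part, of size `m`.
-/

open Finset

variable {α : Type*} [DecidableEq α]

namespace Finset

variable {O X Y X₁ X₂ Y₁ Y₂ : Finset α}

theorem union_sdiff_of_disjoint_of_subset (hX : Disjoint X O) (hY : Y ⊆ O) :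
    (X ∪ Y) \ O = X := by
  rw [union_sdiff_distrib, sdiff_eq_self_of_disjoint hX, sdiff_eq_empty_iff_subset.2 hY,
    union_empty]

theorem union_inter_of_disjoint_of_subset (hX : Disjoint X O) (hY : Y ⊆ O) :
    (X ∪ Y) ∩ O = Y := by
  rw [union_inter_distrib_right, disjoint_iff_inter_eq_empty.1 hX, inter_eq_left.2 hY,
    empty_union]

theorem card_union_inter_union_of_disjoint_of_subset (hX₁ : Disjoint X₁ O) (hX₂ : Disjoint X₂ O)
    (hY₁ : Y₁ ⊆ O) (hY₂ : Y₂ ⊆ O) :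
    #((X₁ ∪ Y₁) ∩ (X₂ ∪ Y₂)) = #(X₁ ∩ X₂) + #(Y₁ ∩ Y₂) := by
  rw [← card_sdiff_add_card_inter _ O, show ((X₁ ∪ Y₁) ∩ (X₂ ∪ Y₂)) \ O =
      ((X₁ ∪ Y₁) \ O) ∩ ((X₂ ∪ Y₂) \ O) from inf_sdiff,
    union_sdiff_of_disjoint_of_subset hX₁ hY₁, union_sdiff_of_disjoint_of_subset hX₂ hY₂,
    inter_inter_distrib_right, union_inter_of_disjoint_of_subset hX₁ hY₁,
    union_inter_of_disjoint_of_subset hX₂ hY₂]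

theorem union_eq_union_iff_of_disjoint_of_subset (hX₁ : Disjoint X₁ O) (hX₂ : Disjoint X₂ O)
    (hY₁ : Y₁ ⊆ O) (hY₂ : Y₂ ⊆ O) : X₁ ∪ Y₁ = X₂ ∪ Y₂ ↔ X₁ = X₂ ∧ Y₁ = Y₂ := by
  refine ⟨fun h => ⟨?_, ?_⟩, fun ⟨hX, hY⟩ => hX ▸ hY ▸ rfl⟩
  · rw [← union_sdiff_of_disjoint_of_subset hX₁ hY₁, h,
      union_sdiff_of_disjoint_of_subset hX₂ hY₂]
  · rw [← union_inter_of_disjoint_of_subset hX₁ hY₁, h,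
      union_inter_of_disjoint_of_subset hX₂ hY₂]

theorem disjoint_of_mem_pair_sdiff {Z₁ Z₂ : Finset α}
    (hZ₁ : Z₁ ∈ ({Y, O \ Y} : Finset (Finset α))) (hZ₂ : Z₂ ∈ ({Y, O \ Y} : Finset (Finset α)))
    (hne : Z₁ ≠ Z₂) : Disjoint Z₁ Z₂ := by
  simp only [mem_insert, mem_singleton] at hZ₁ hZ₂
  rcases hZ₁ with rfl | rfl <;> rcases hZ₂ with rfl | rfl
  exacts [absurd rfl hne, disjoint_sdiff, sdiff_disjoint, absurd rfl hne]

theorem card_inter_sdiff_of_subset (hY₁ : Y₁ ⊆ O) :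
    #(Y₁ ∩ (O \ Y₂)) = #Y₁ - #(Y₁ ∩ Y₂) := by
  rw [← inter_sdiff_assoc, inter_eq_left.2 hY₁, card_sdiff, inter_comm]

theorem card_inter_eq_of_mem_pair_sdiff {t : ℕ} (hO : #O = 4 * t) (hY₁ : Y₁ ⊆ O) (hY₂ : Y₂ ⊆ O)
    (hc₁ : #Y₁ = 2 * t) (hc₂ : #Y₂ = 2 * t) (hi : #(Y₁ ∩ Y₂) = t) {Z₁ Z₂ : Finset α}
    (hZ₁ : Z₁ ∈ ({Y₁, O \ Y₁} : Finset (Finset α)))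
    (hZ₂ : Z₂ ∈ ({Y₂, O \ Y₂} : Finset (Finset α))) :
    #(Z₁ ∩ Z₂) = t := by
  have step : ∀ {Y Y'}, Y ⊆ O → #Y = 2 * t → #(Y ∩ Y') = t → #(Y ∩ (O \ Y')) = t :=
    fun hY hc hi => by rw [card_inter_sdiff_of_subset hY]; omega
  have hc₂' : #(O \ Y₂) = 2 * t := by rw [card_sdiff_of_subset hY₂]; omega
  have h₁₂ : #(Y₁ ∩ (O \ Y₂)) = t := step hY₁ hc₁ hi
  have h₂₁ : #(Y₂ ∩ (O \ Y₁)) = t := step hY₂ hc₂ (by rwa [inter_comm])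
  simp only [mem_insert, mem_singleton] at hZ₁ hZ₂
  rcases hZ₁ with rfl | rfl <;> rcases hZ₂ with rfl | rfl
  · exact hi
  · exact h₁₂
  · rwa [inter_comm]
  · rw [inter_comm]
    exact step sdiff_subset hc₂' (by rwa [inter_comm])

end Finset

section CenteredCliqueProduct

variable {O : Finset α} {𝒳 : Finset (Finset α)} {δ : Finset α → Finset α}

/-- The paper's `𝒳 #_δ 𝒴`, where `O` is the common centre. -/
def centeredCliqueProduct (O : Finset α) (𝒳 : Finset (Finset α)) (δ : Finset α → Finset α) :
    Finset (Finset α) :=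
  insert O ((𝒳.image fun X => X ∪ δ X) ∪ (𝒳.image fun X => X ∪ (O \ δ X)))

theorem mem_centeredCliqueProduct {A : Finset α} :
    A ∈ centeredCliqueProduct O 𝒳 δ ↔
      A = O ∨ ∃ X ∈ 𝒳, ∃ Y ∈ ({δ X, O \ δ X} : Finset (Finset α)), A = X ∪ Y := by
  simp [centeredCliqueProduct, or_and_right, and_or_left, exists_or, eq_comm]

theorem card_centeredCliqueProduct (h𝒳 : ∀ X ∈ 𝒳, X.Nonempty ∧ Disjoint X O)
    (hδ : ∀ X ∈ 𝒳, (δ X).Nonempty ∧ δ X ⊆ O) :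
    #(centeredCliqueProduct O 𝒳 δ) = 2 * #𝒳 + 1 := by
  have hinj : ∀ X₁ ∈ 𝒳, ∀ X₂ ∈ 𝒳, ∀ {Y₁ Y₂}, Y₁ ⊆ O → Y₂ ⊆ O →
      (X₁ ∪ Y₁ = X₂ ∪ Y₂ ↔ X₁ = X₂ ∧ Y₁ = Y₂) := fun X₁ h₁ X₂ h₂ _ _ =>
    union_eq_union_iff_of_disjoint_of_subset (h𝒳 X₁ h₁).2 (h𝒳 X₂ h₂).2
  have hne_centre : ∀ X ∈ 𝒳, ∀ {Y}, Y ⊆ O → X ∪ Y ≠ O := fun X hX Y hY h =>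
    (h𝒳 X hX).1.ne_empty ((union_eq_union_iff_of_disjoint_of_subset (h𝒳 X hX).2
      (disjoint_empty_left O) hY subset_rfl).1 (h.trans (empty_union O).symm)).1
  rw [centeredCliqueProduct, card_insert_of_notMem, card_union_of_disjoint,
    card_image_of_injOn, card_image_of_injOn]
  · ring
  · intro X₁ h₁ X₂ h₂ h
    exact ((hinj X₁ h₁ X₂ h₂ sdiff_subset sdiff_subset).1 h).1
  · intro X₁ h₁ X₂ h₂ h
    exact ((hinj X₁ h₁ X₂ h₂ (hδ X₁ h₁).2 (hδ X₂ h₂).2).1 h).1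
  · simp only [disjoint_left, mem_image]
    rintro _ ⟨X₁, h₁, rfl⟩ ⟨X₂, h₂, h⟩
    obtain ⟨rfl, h⟩ := (hinj X₁ h₁ X₂ h₂ (hδ X₁ h₁).2 sdiff_subset).1 h.symm
    have hdisj : Disjoint (δ X₁) (O \ δ X₁) := disjoint_sdiff
    rw [← h] at hdisj
    exact (hδ X₁ h₁).1.ne_empty (disjoint_self.1 hdisj)
  · simp only [mem_union, mem_image, not_or, not_exists, not_and]
    exact ⟨fun X hX => hne_centre X hX (hδ X hX).2, fun X hX => hne_centre X hX sdiff_subset⟩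

theorem card_inter_of_mem_centeredCliqueProduct {t : ℕ} (hO : #O = 4 * t)
    (h𝒳 : ∀ X ∈ 𝒳, #X = 2 * t ∧ Disjoint X O)
    (h𝒳int : ∀ X₁ ∈ 𝒳, ∀ X₂ ∈ 𝒳, X₁ ≠ X₂ → #(X₁ ∩ X₂) = t)
    (hδ : ∀ X ∈ 𝒳, #(δ X) = 2 * t ∧ δ X ⊆ O)
    (hδint : ∀ X₁ ∈ 𝒳, ∀ X₂ ∈ 𝒳, X₁ ≠ X₂ → #(δ X₁ ∩ δ X₂) = t)
    {A B : Finset α} (hA : A ∈ centeredCliqueProduct O 𝒳 δ)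
    (hB : B ∈ centeredCliqueProduct O 𝒳 δ) (hAB : A ≠ B) :
    #(A ∩ B) = 2 * t := by
  have hpair : ∀ X ∈ 𝒳, ∀ Y ∈ ({δ X, O \ δ X} : Finset (Finset α)), Y ⊆ O ∧ #Y = 2 * t := by
    intro X hX Y hY
    obtain ⟨hc, hs⟩ := hδ X hX
    simp only [mem_insert, mem_singleton] at hY
    rcases hY with rfl | rfl
    · exact ⟨hs, hc⟩
    · exact ⟨sdiff_subset, by rw [card_sdiff_of_subset hs]; omega⟩
  have hcentre : ∀ X ∈ 𝒳, ∀ Y ∈ ({δ X, O \ δ X} : Finset (Finset α)),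
      #(O ∩ (X ∪ Y)) = 2 * t := fun X hX Y hY => by
    rw [inter_comm, union_inter_of_disjoint_of_subset (h𝒳 X hX).2 (hpair X hX Y hY).1,
      (hpair X hX Y hY).2]
  rw [mem_centeredCliqueProduct] at hA hB
  rcases hA with rfl | ⟨X₁, h₁, Y₁, hY₁, rfl⟩ <;> rcases hB with rfl | ⟨X₂, h₂, Y₂, hY₂, rfl⟩
  · exact absurd rfl hAB
  · exact hcentre X₂ h₂ Y₂ hY₂
  · rw [inter_comm]
    exact hcentre X₁ h₁ Y₁ hY₁
  rw [card_union_inter_union_of_disjoint_of_subset (h𝒳 X₁ h₁).2 (h𝒳 X₂ h₂).2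
    (hpair X₁ h₁ Y₁ hY₁).1 (hpair X₂ h₂ Y₂ hY₂).1]
  by_cases hX : X₁ = X₂
  · subst hX
    have hY : Y₁ ≠ Y₂ := by rintro rfl; exact hAB rfl
    rw [inter_self, (h𝒳 X₁ h₁).1,
      disjoint_iff_inter_eq_empty.1 (disjoint_of_mem_pair_sdiff hY₁ hY₂ hY), card_empty,
      add_zero]
  · rw [h𝒳int X₁ h₁ X₂ h₂ hX, card_inter_eq_of_mem_pair_sdiff hO (hδ X₁ h₁).2 (hδ X₂ h₂).2
      (hδ X₁ h₁).1 (hδ X₂ h₂).1 (hδint X₁ h₁ X₂ h₂ hX) hY₁ hY₂]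
    ring

end CenteredCliqueProduct

theorem stmt_6_general (k m n : ℕ) (hk : 3 ≤ k) (hm : m = 2 ^ (k - 2)) (hn : n = 4 * m - 1)
    (O : Finset (Fin n)) (hO : O.card = 2 * m)
    (𝒳 : Finset (Finset (Fin n)))
    (h𝒳card : 𝒳.card = 2 * m - 1)
    (h𝒳 : ∀ X ∈ 𝒳, X.card = m ∧ Disjoint X O)
    (h𝒳int : ∀ X₁ ∈ 𝒳, ∀ X₂ ∈ 𝒳, X₁ ≠ X₂ → (X₁ ∩ X₂).card = m / 2)
    (Z : Finset (Fin n)) (hZO : Z ⊆ O)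
    (𝒴 : Finset (Finset (Fin n)))
    (h𝒴 : ∀ Y ∈ 𝒴, Y.card = m ∧ Y ⊆ Z)
    (h𝒴int : ∀ Y₁ ∈ 𝒴, ∀ Y₂ ∈ 𝒴, Y₁ ≠ Y₂ → (Y₁ ∩ Y₂).card = m / 2)
    (δ : Finset (Fin n) → Finset (Fin n))
    (hδ : Set.BijOn δ ↑𝒳 ↑𝒴) :
    let 𝒞 : Finset (Finset (Fin n)) :=
      insert O ((𝒳.image fun X => X ∪ δ X) ∪ (𝒳.image fun X => X ∪ (O \ δ X)))
    𝒞.card = n ∧ ∀ A ∈ 𝒞, ∀ B ∈ 𝒞, A ≠ B → (A ∩ B).card = m := by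
  obtain ⟨t, rfl⟩ : ∃ t, m = 2 * t :=
    ⟨2 ^ (k - 3), by rw [hm, ← pow_succ']; congr 1; omega⟩
  have ht : 0 < t := by
    have : 0 < 2 ^ (k - 2) := by positivity
    omega
  have hhalf : 2 * t / 2 = t := by omega
  have hδ𝒴 : ∀ X ∈ 𝒳, #(δ X) = 2 * t ∧ δ X ⊆ O := fun X hX =>
    ⟨(h𝒴 _ (hδ.mapsTo hX)).1, (h𝒴 _ (hδ.mapsTo hX)).2.trans hZO⟩
  have hδint : ∀ X₁ ∈ 𝒳, ∀ X₂ ∈ 𝒳, X₁ ≠ X₂ → #(δ X₁ ∩ δ X₂) = t := fun X₁ h₁ X₂ h₂ hne =>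
    hhalf ▸ h𝒴int _ (hδ.mapsTo h₁) _ (hδ.mapsTo h₂) (hne ∘ hδ.injOn h₁ h₂)
  refine ⟨?_, fun A hA B hB hAB => card_inter_of_mem_centeredCliqueProduct (by omega)
    h𝒳 (hhalf ▸ h𝒳int) hδ𝒴 hδint hA hB hAB⟩
  have hcard := card_centeredCliqueProduct (O := O) (δ := δ)
    (fun X hX => ⟨card_pos.1 (by rw [(h𝒳 X hX).1]; omega), (h𝒳 X hX).2⟩)
    (fun X hX => ⟨card_pos.1 (by rw [(hδ𝒴 X hX).1]; omega), (hδ𝒴 X hX).2⟩)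
  exact hcard.trans (by omega)

theorem stmt_6 (k m n : ℕ) (hk : 3 ≤ k) (hm : m = 2 ^ (k - 2)) (hn : n = 4 * m - 1)
    (O : Finset (Fin n)) (hO : O.card = 2 * m)
    (𝒳 : Finset (Finset (Fin n)))
    (h𝒳card : 𝒳.card = 2 * m - 1)
    (h𝒳 : ∀ X ∈ 𝒳, X.card = m ∧ Disjoint X O)
    (h𝒳int : ∀ X₁ ∈ 𝒳, ∀ X₂ ∈ 𝒳, X₁ ≠ X₂ → (X₁ ∩ X₂).card = m / 2)
    (Z : Finset (Fin n)) (hZO : Z ⊆ O) (hZcard : Z.card = 2 * m - 1)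
    (𝒴 : Finset (Finset (Fin n)))
    (h𝒴card : 𝒴.card = 2 * m - 1)
    (h𝒴 : ∀ Y ∈ 𝒴, Y.card = m ∧ Y ⊆ Z)
    (h𝒴int : ∀ Y₁ ∈ 𝒴, ∀ Y₂ ∈ 𝒴, Y₁ ≠ Y₂ → (Y₁ ∩ Y₂).card = m / 2)
    (δ : Finset (Fin n) → Finset (Fin n))
    (hδ : Set.BijOn δ ↑𝒳 ↑𝒴) :
    let 𝒞 : Finset (Finset (Fin n)) :=
      insert O ((𝒳.image fun X => X ∪ δ X) ∪ (𝒳.image fun X => X ∪ (O \ δ X)))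
    𝒞.card = n ∧ ∀ A ∈ 𝒞, ∀ B ∈ 𝒞, A ≠ B → (A ∩ B).card = m :=
  stmt_6_general k m n hk hm hn O hO 𝒳 h𝒳card h𝒳 h𝒳int Z hZO 𝒴 h𝒴 h𝒴int δ hδ
end

section
/- Under the hypotheses of the previous setup, for distinct C, C̃ ∈ C ∖ {O} with C̃ ∉ {C, O △ C}, one has |X_C̃ ∩ X_C| = |Y_C̃ ∩ Y_C| = |Y_C̃ ∩ (O ∖ Y_C)| = m/2. -/
/-! If a set meets each of `C`, `O` and `O ∆ C` in `m` points, then the three pieces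
`C' ∩ C ∩ O`, `(C' ∩ C) \ O` and `(C' ∩ O) \ C` have sizes `a, b, c` with
`a + b = a + c = b + c = m`, so each of them has size `m / 2`. -/

namespace Finset

variable {α : Type*} [DecidableEq α]

theorem card_inter_symmDiff (A B O : Finset α) :
    #(A ∩ symmDiff O B) = #((A ∩ B) \ O) + #((A ∩ O) \ B) := by
  have hsplit : A ∩ symmDiff O B = (A ∩ B) \ O ∪ (A ∩ O) \ B := by
    ext x
    simp only [mem_inter, mem_union, mem_sdiff, mem_symmDiff]
    tauto
  have hdisj : Disjoint ((A ∩ B) \ O) ((A ∩ O) \ B) := by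
    rw [disjoint_left]
    intro x hx hx'
    simp only [mem_sdiff, mem_inter] at hx hx'
    tauto
  rw [hsplit, card_union_of_disjoint hdisj]

theorem card_pieces_eq_half_of_card_inter_eq {A B O : Finset α} {m : ℕ}
    (hB : #(A ∩ B) = m) (hO : #(A ∩ O) = m) (hOB : #(A ∩ symmDiff O B) = m) :
    #((A \ O) ∩ (B \ O)) = m / 2 ∧ #((A ∩ O) ∩ (B ∩ O)) = m / 2 ∧
      #((A ∩ O) ∩ (O \ (B ∩ O))) = m / 2 := by
  have hAB : #(A ∩ B ∩ O) + #((A ∩ B) \ O) = m := by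
    rw [card_inter_add_card_sdiff, hB]
  have hAO : #(A ∩ B ∩ O) + #((A ∩ O) \ B) = m := by
    rw [← hO, ← card_inter_add_card_sdiff (A ∩ O) B, inter_right_comm]
  have hAOB := card_inter_symmDiff A B O
  have hX : (A \ O) ∩ (B \ O) = (A ∩ B) \ O := by
    ext x; simp only [mem_inter, mem_sdiff]; tauto
  have hY : (A ∩ O) ∩ (B ∩ O) = A ∩ B ∩ O := by
    ext x; simp only [mem_inter]; tauto
  have hY' : (A ∩ O) ∩ (O \ (B ∩ O)) = (A ∩ O) \ B := by
    ext x; simp only [mem_inter, mem_sdiff]; tauto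
  rw [hX, hY, hY']
  omega

end Finset

theorem stmt_10_general (m : ℕ)
    (𝒞 : Finset (Finset (Fin (4 * m - 1))))
    (hint : ∀ C₁ ∈ 𝒞, ∀ C₂ ∈ 𝒞, C₁ ≠ C₂ → (C₁ ∩ C₂).card = m)
    (O : Finset (Fin (4 * m - 1))) (hO : O ∈ 𝒞)
    (hcenter : ∀ C ∈ 𝒞, C ≠ O → symmDiff O C ∈ 𝒞) :
    ∀ C ∈ 𝒞, ∀ C' ∈ 𝒞, C ≠ O → C' ≠ O → C' ≠ C → C' ≠ symmDiff O C →
      ((C' \ O) ∩ (C \ O)).card = m / 2 ∧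
      ((C' ∩ O) ∩ (C ∩ O)).card = m / 2 ∧
      ((C' ∩ O) ∩ (O \ (C ∩ O))).card = m / 2 := by
  intro C hC C' hC' hCO hC'O hC'C hC'D
  exact Finset.card_pieces_eq_half_of_card_inter_eq (hint C' hC' C hC hC'C)
    (hint C' hC' O hO hC'O) (hint C' hC' _ (hcenter C hC hCO) hC'D)

theorem stmt_10 (m : ℕ) (hm : Even m)
    (𝒞 : Finset (Finset (Fin (4 * m - 1))))
    (hcard : ∀ C ∈ 𝒞, C.card = 2 * m)
    (hint : ∀ C₁ ∈ 𝒞, ∀ C₂ ∈ 𝒞, C₁ ≠ C₂ → (C₁ ∩ C₂).card = m)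
    (O : Finset (Fin (4 * m - 1))) (hO : O ∈ 𝒞)
    (hcenter : ∀ C ∈ 𝒞, C ≠ O → symmDiff O C ∈ 𝒞) :
    ∀ C ∈ 𝒞, ∀ C' ∈ 𝒞, C ≠ O → C' ≠ O → C' ≠ C → C' ≠ symmDiff O C →
      ((C' \ O) ∩ (C \ O)).card = m / 2 ∧
      ((C' ∩ O) ∩ (C ∩ O)).card = m / 2 ∧
      ((C' ∩ O) ∩ (O \ (C ∩ O))).card = m / 2 :=
  stmt_10_general m 𝒞 hint O hO hcenter
end

section
/- Let C be a centered (4m-1)-element clique with center O as above. Then the family X = {C ∖ O : C ∈ C, C ≠ O} consists of exactly 2m - 1 distinct m-element subsets of [4m-1] ∖ O, any two of which intersect in exactly m/2 elements. -/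
/-!
Write `X_C = C \ O`. For `C₁, C₂ ∈ 𝒞 \ {O}` the sets `C₁ ∩ C₂` and `C₁ ∩ (O ∆ C₂)` both meet the
complement of `O` exactly in `X_{C₁} ∩ X_{C₂}`, while inside `O` they split `C₁ ∩ O`. Counting gives
`2 m = m + 2 |X_{C₁} ∩ X_{C₂}|` whenever `C₁ ∉ {C₂, O ∆ C₂}`, so such pairs meet in `m / 2` points.
Since `m ≠ 0` this also forces `X_{C₁} ≠ X_{C₂}`, so `C ↦ X_C` is exactly two-to-one with fibres
`{C, O ∆ C}` and the `4m - 2` sets of `𝒞 \ {O}` give `2m - 1` distinct sets.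
-/

open Finset

namespace Finset

variable {α β : Type*} [DecidableEq β]

theorem card_eq_mul_card_image_of_card_fiber {f : α → β} (s : Finset α) (n : ℕ)
    (hn : ∀ b ∈ s.image f, #{a ∈ s | f a = b} = n) : #s = n * #(s.image f) :=
  le_antisymm (card_le_mul_card_image s n fun b hb ↦ (hn b hb).le)
    (mul_card_image_le_card s n fun b hb ↦ (hn b hb).ge)

theorem card_inter_add_card_inter_symmDiff [DecidableEq α] (A B O : Finset α) :
    #(A ∩ B) + #(A ∩ symmDiff O B) = #(A ∩ O) + 2 * #((A \ O) ∩ (B \ O)) := by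
  have hB := card_inter_add_card_sdiff (A ∩ B) O
  have hOB := card_inter_add_card_sdiff (A ∩ symmDiff O B) O
  have hO := card_inter_add_card_sdiff (A ∩ O) B
  have e₁ : (A ∩ B) \ O = (A \ O) ∩ (B \ O) := by ext; simp only [mem_sdiff, mem_inter]; tauto
  have e₂ : (A ∩ symmDiff O B) \ O = (A \ O) ∩ (B \ O) := by
    ext; simp only [mem_sdiff, mem_inter, mem_symmDiff]; tauto
  have e₃ : (A ∩ symmDiff O B) ∩ O = (A ∩ O) \ B := by
    ext; simp only [mem_sdiff, mem_inter, mem_symmDiff]; tauto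
  have e₄ : (A ∩ B) ∩ O = (A ∩ O) ∩ B := by ext; simp only [mem_inter]; tauto
  rw [e₁, e₄] at hB
  rw [e₂, e₃] at hOB
  omega

end Finset

variable {α : Type*} [DecidableEq α]

structure IsCenteredClique (𝒞 : Finset (Finset α)) (m : ℕ) (O : Finset α) : Prop where
  card_eq : ∀ C ∈ 𝒞, #C = 2 * m
  card_inter : ∀ C₁ ∈ 𝒞, ∀ C₂ ∈ 𝒞, C₁ ≠ C₂ → #(C₁ ∩ C₂) = m
  center_mem : O ∈ 𝒞
  symmDiff_mem : ∀ C ∈ 𝒞, C ≠ O → symmDiff O C ∈ 𝒞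

namespace IsCenteredClique

variable {𝒞 : Finset (Finset α)} {m : ℕ} {O C C₁ C₂ : Finset α} (h : IsCenteredClique 𝒞 m O)
include h

theorem ne_zero (hC : C ∈ 𝒞) (hCO : C ≠ O) : m ≠ 0 := by
  rintro rfl
  have hC₀ : C = ∅ := card_eq_zero.mp (h.card_eq C hC)
  have hO₀ : O = ∅ := card_eq_zero.mp (h.card_eq O h.center_mem)
  exact hCO (hC₀.trans hO₀.symm)

theorem card_sdiff_center (hC : C ∈ 𝒞) (hCO : C ≠ O) : #(C \ O) = m := by
  have := card_inter_add_card_sdiff C O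
  rw [h.card_inter C hC O h.center_mem hCO, h.card_eq C hC] at this
  omega

theorem symmDiff_mem_erase (hC : C ∈ 𝒞) (hCO : C ≠ O) : symmDiff O C ∈ 𝒞.erase O := by
  refine mem_erase.mpr ⟨fun hO ↦ ?_, h.symmDiff_mem C hC hCO⟩
  have hC₀ : C = ∅ := symmDiff_eq_left.mp hO
  exact h.ne_zero hC hCO (by simpa [hC₀] using h.card_eq C hC)

theorem symmDiff_ne_self (hC : C ∈ 𝒞) (hCO : C ≠ O) : symmDiff O C ≠ C := fun hOC ↦ by
  have hO₀ : O = ∅ := symmDiff_eq_right.mp hOC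
  exact h.ne_zero hC hCO (by simpa [hO₀] using h.card_eq O h.center_mem)

theorem two_mul_card_sdiff_inter_sdiff (hC₁ : C₁ ∈ 𝒞) (hC₁O : C₁ ≠ O) (hC₂ : C₂ ∈ 𝒞)
    (hC₂O : C₂ ≠ O) (h₁₂ : C₁ ≠ C₂) (h₁₂' : C₁ ≠ symmDiff O C₂) :
    2 * #((C₁ \ O) ∩ (C₂ \ O)) = m := by
  have := card_inter_add_card_inter_symmDiff C₁ C₂ O
  rw [h.card_inter C₁ hC₁ C₂ hC₂ h₁₂, h.card_inter C₁ hC₁ _ (h.symmDiff_mem C₂ hC₂ hC₂O) h₁₂',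
    h.card_inter C₁ hC₁ O h.center_mem hC₁O] at this
  omega

theorem sdiff_center_eq_iff (hC₁ : C₁ ∈ 𝒞) (hC₁O : C₁ ≠ O) (hC₂ : C₂ ∈ 𝒞) (hC₂O : C₂ ≠ O) :
    C₁ \ O = C₂ \ O ↔ C₁ = C₂ ∨ C₁ = symmDiff O C₂ := by
  refine ⟨fun hX ↦ ?_, ?_⟩
  · by_contra! hne
    have := h.two_mul_card_sdiff_inter_sdiff hC₁ hC₁O hC₂ hC₂O hne.1 hne.2
    rw [← hX, inter_self, h.card_sdiff_center hC₁ hC₁O] at this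
    exact h.ne_zero hC₁ hC₁O (by omega)
  · rintro (rfl | rfl)
    · rfl
    · exact symmDiff_sdiff_left _ _

theorem filter_sdiff_center_eq (hC : C ∈ 𝒞) (hCO : C ≠ O) :
    {D ∈ 𝒞.erase O | D \ O = C \ O} = {C, symmDiff O C} := by
  ext D
  simp only [mem_filter, mem_insert, mem_singleton, mem_erase]
  constructor
  · rintro ⟨⟨hDO, hD⟩, hX⟩
    rcases (h.sdiff_center_eq_iff hD hDO hC hCO).mp hX with rfl | rfl
    · exact .inl rfl
    · exact .inr rfl
  · rintro (rfl | rfl)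
    · exact ⟨⟨hCO, hC⟩, rfl⟩
    · exact ⟨mem_erase.mp (h.symmDiff_mem_erase hC hCO), symmDiff_sdiff_left _ _⟩

theorem card_erase_center_eq :
    #(𝒞.erase O) = 2 * #((𝒞.erase O).image fun D ↦ D \ O) := by
  refine card_eq_mul_card_image_of_card_fiber _ 2 fun X hX ↦ ?_
  obtain ⟨C, hCe, rfl⟩ := mem_image.mp hX
  obtain ⟨hCO, hC⟩ := mem_erase.mp hCe
  rw [h.filter_sdiff_center_eq hC hCO, card_pair (h.symmDiff_ne_self hC hCO).symm]

end IsCenteredClique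

theorem stmt_11_general (m : ℕ)
    (𝒞 : Finset (Finset (Fin (4 * m - 1))))
    (h𝒞card : 𝒞.card = 4 * m - 1)
    (hcard : ∀ C ∈ 𝒞, C.card = 2 * m)
    (hint : ∀ C₁ ∈ 𝒞, ∀ C₂ ∈ 𝒞, C₁ ≠ C₂ → (C₁ ∩ C₂).card = m)
    (O : Finset (Fin (4 * m - 1))) (hO : O ∈ 𝒞)
    (hcenter : ∀ C ∈ 𝒞, C ≠ O → symmDiff O C ∈ 𝒞) :
    let 𝒳 : Finset (Finset (Fin (4 * m - 1))) := (𝒞.erase O).image (fun C => C \ O)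
    𝒳.card = 2 * m - 1 ∧
    (∀ X ∈ 𝒳, X.card = m ∧ Disjoint X O) ∧
    (∀ X₁ ∈ 𝒳, ∀ X₂ ∈ 𝒳, X₁ ≠ X₂ → (X₁ ∩ X₂).card = m / 2) := by
  intro 𝒳
  have h : IsCenteredClique 𝒞 m O := ⟨hcard, hint, hO, hcenter⟩
  refine ⟨?_, ?_, ?_⟩
  · have : #𝒞 - 1 = 2 * #𝒳 := card_erase_of_mem hO ▸ h.card_erase_center_eq
    omega
  · simp only [𝒳, forall_mem_image, mem_erase]
    exact fun C ⟨hCO, hC⟩ ↦ ⟨h.card_sdiff_center hC hCO, sdiff_disjoint⟩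
  · simp only [𝒳, forall_mem_image, mem_erase]
    intro C₁ ⟨hC₁O, hC₁⟩ C₂ ⟨hC₂O, hC₂⟩ hX
    rw [Ne, h.sdiff_center_eq_iff hC₁ hC₁O hC₂ hC₂O, not_or] at hX
    have := h.two_mul_card_sdiff_inter_sdiff hC₁ hC₁O hC₂ hC₂O hX.1 hX.2
    omega

theorem stmt_11 (k m : ℕ) (hk : 3 ≤ k) (hm : m = 2 ^ (k - 2))
    (𝒞 : Finset (Finset (Fin (4 * m - 1))))
    (h𝒞card : 𝒞.card = 4 * m - 1)
    (hcard : ∀ C ∈ 𝒞, C.card = 2 * m)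
    (hint : ∀ C₁ ∈ 𝒞, ∀ C₂ ∈ 𝒞, C₁ ≠ C₂ → (C₁ ∩ C₂).card = m)
    (O : Finset (Fin (4 * m - 1))) (hO : O ∈ 𝒞)
    (hcenter : ∀ C ∈ 𝒞, C ≠ O → symmDiff O C ∈ 𝒞) :
    let 𝒳 : Finset (Finset (Fin (4 * m - 1))) := (𝒞.erase O).image (fun C => C \ O)
    𝒳.card = 2 * m - 1 ∧
    (∀ X ∈ 𝒳, X.card = m ∧ Disjoint X O) ∧
    (∀ X₁ ∈ 𝒳, ∀ X₂ ∈ 𝒳, X₁ ≠ X₂ → (X₁ ∩ X₂).card = m / 2) :=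
  stmt_11_general m 𝒞 h𝒞card hcard hint O hO hcenter
end

section
/- Let δ be a bijective transformation of the Fano plane fixing each point of a simplex {P₁,P₂,P₃,P₄}. Then δ permutes the 3-point line L complementary to the simplex, and: if δ|_L is the identity then δ is the identity; if δ|_L is a transposition then δ maps exactly 3 lines to lines; if δ|_L is a 3-cycle then δ maps exactly 1 line to a line. -/
/-- The 7 points of the Fano plane `PG(2,2)`: nonzero vectors of `F_2^3`. -/
def fanoPoints : Finset (Fin 3 → ZMod 2) :=
  Finset.univ.filter (fun v => v ≠ 0)

/-- Lines of the Fano plane: 3-element sets of nonzero vectors summing to `0`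
(equivalently, triples `{a, b, a + b}`). -/
def IsFanoLine (L : Finset (Fin 3 → ZMod 2)) : Prop :=
  L.card = 3 ∧ (0 : Fin 3 → ZMod 2) ∉ L ∧ ∑ v ∈ L, v = 0

instance : DecidablePred IsFanoLine := fun L =>
  decidable_of_iff (L.card = 3 ∧ (0 : Fin 3 → ZMod 2) ∉ L ∧ ∑ v ∈ L, v = 0) Iff.rfl

/-- An (ordered) simplex of the Fano plane: four points, no three collinear. -/
def IsFanoSimplex (X : Fin 4 → (Fin 3 → ZMod 2)) : Prop :=
  (∀ i, X i ≠ 0) ∧ Function.Injective X ∧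
    ∀ i j l : Fin 4, i ≠ j → j ≠ l → i ≠ l →
      ¬ IsFanoLine ({X i, X j, X l} : Finset (Fin 3 → ZMod 2))

/-- The index of a bijective transformation of the Fano plane:
the number of lines mapped onto lines. -/
def fanoIndex (δ : Equiv.Perm (Fin 3 → ZMod 2)) : ℕ :=
  (Finset.univ.filter
    (fun L : Finset (Fin 3 → ZMod 2) => IsFanoLine L ∧ IsFanoLine (L.image δ))).card

/-! The linear group of `𝔽₂³` acts on the Fano plane by collineations and carries any simplex to
the standard frame `e₀, e₁, e₂, e₀ + e₁ + e₂`; conjugating by a collineation does not change the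
index, so it suffices to treat the standard frame. A transformation fixing it is determined by a
permutation of the complementary line `{e₀ + e₁, e₀ + e₂, e₁ + e₂}`. Each of the six other lines
consists of one point of that line and two frame points, so it is mapped onto a line exactly when
that point is fixed: the index is `1 + 2 · #(fixed points on the line)`, that is 7, 3 or 1. -/

local notation "𝕍" => Fin 3 → ZMod 2

open Finset

lemma isFanoLine_image_addEquiv (g : 𝕍 ≃+ 𝕍) (M : Finset 𝕍) :
    IsFanoLine (M.image g) ↔ IsFanoLine M := by
  have hsum : ∑ v ∈ M.image g, v = g (∑ v ∈ M, v) := by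
    rw [sum_image (fun x _ y _ h => g.injective h), map_sum]
  simp only [IsFanoLine, card_image_of_injective M g.injective, hsum, AddEquiv.map_eq_zero_iff,
    mem_image, exists_eq_right]

lemma fanoIndex_conj (g : 𝕍 ≃+ 𝕍) (δ : Equiv.Perm 𝕍) :
    fanoIndex (g.toEquiv⁻¹ * δ * g.toEquiv) = fanoIndex δ := by
  simp only [fanoIndex, ← Fintype.card_subtype]
  refine Fintype.card_congr ((Equiv.finsetCongr g.toEquiv).subtypeEquiv fun M => ?_)
  have himage : M.image (g.toEquiv⁻¹ * δ * g.toEquiv) = ((M.image g).image δ).image g.symm := by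
    simp only [image_image]; rfl
  rw [himage, Equiv.finsetCongr_apply, map_eq_image, isFanoLine_image_addEquiv g.symm,
    ← isFanoLine_image_addEquiv g M]
  rfl

lemma IsFanoSimplex.addEquiv_comp {P : Fin 4 → 𝕍} (hP : IsFanoSimplex P) (g : 𝕍 ≃+ 𝕍) :
    IsFanoSimplex (g ∘ P) := by
  obtain ⟨hne, hinj, hcol⟩ := hP
  refine ⟨fun i => by simpa using hne i, g.injective.comp hinj, fun i j l hij hjl hil => ?_⟩
  rw [← isFanoLine_image_addEquiv g.symm]
  simpa [image_insert] using hcol i j l hij hjl hil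

lemma image_compl_eq_of_forall_mem_fixed {α : Type*} [Fintype α] [DecidableEq α]
    (δ : Equiv.Perm α) {T : Finset α} (hT : ∀ t ∈ T, δ t = t) : Tᶜ.image δ = Tᶜ := by
  refine eq_of_subset_of_card_le (fun y hy => ?_) (card_image_of_injective _ δ.injective).ge
  obtain ⟨x, hx, rfl⟩ := mem_image.mp hy
  refine mem_compl.2 fun hδx => (mem_compl.1 hx) ?_
  rwa [δ.injective (hT _ hδx)] at hδx

lemma isFanoLine_of_add_add_eq_zero {a b c : 𝕍} (ha : a ≠ 0) (hb : b ≠ 0) (hc : c ≠ 0)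
    (hab : a ≠ b) (hac : a ≠ c) (hbc : b ≠ c) (h : a + b + c = 0) : IsFanoLine {a, b, c} := by
  refine ⟨card_eq_three.2 ⟨a, b, c, hab, hac, hbc, rfl⟩, by simp [ha.symm, hb.symm, hc.symm], ?_⟩
  rwa [sum_insert (by simp [hab, hac]), sum_insert (by simp [hbc]), sum_singleton, ← add_assoc]

lemma IsFanoSimplex.linearIndependent {P : Fin 4 → 𝕍} (hP : IsFanoSimplex P) :
    LinearIndependent (ZMod 2) (fun i : Fin 3 => P i.castSucc) := by
  obtain ⟨hne, hinj, hcol⟩ := hP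
  have hsub : ∀ i j, i ≠ j → P i + P j ≠ 0 := fun i j hij h =>
    hij (hinj (by rwa [← ZModModule.sub_eq_add, sub_eq_zero] at h))
  rw [Fintype.linearIndependent_iff]
  intro c hc
  have hcases : ∀ r : ZMod 2, r = 0 ∨ r = 1 := by decide
  rw [Fin.sum_univ_three] at hc
  rcases hcases (c 0) with h0 | h0 <;> rcases hcases (c 1) with h1 | h1 <;>
    rcases hcases (c 2) with h2 | h2 <;>
    simp only [h0, h1, h2, zero_smul, one_smul, zero_add, add_zero] at hc
  · intro i; fin_cases i <;> assumption
  all_goals exfalso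
  all_goals first
    | exact hne _ hc
    | exact hsub _ _ (by decide) hc
    | exact hcol 0 1 2 (by decide) (by decide) (by decide) <| isFanoLine_of_add_add_eq_zero
        (hne _) (hne _) (hne _) (hinj.ne (by decide)) (hinj.ne (by decide)) (hinj.ne (by decide)) hc

def stdFrame : Fin 4 → 𝕍 := ![Pi.single 0 1, Pi.single 1 1, Pi.single 2 1, 1]

lemma eq_stdFrame_of_isFanoSimplex {Q : Fin 4 → 𝕍} (hQ : IsFanoSimplex Q)
    (h : ∀ i : Fin 3, Q i.castSucc = stdFrame i.castSucc) : Q = stdFrame := by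
  have hQ' : Q = ![stdFrame 0, stdFrame 1, stdFrame 2, Q 3] := by
    ext i : 1
    fin_cases i
    exacts [h 0, h 1, h 2, rfl]
  have hfourth : ∀ v, IsFanoSimplex ![stdFrame 0, stdFrame 1, stdFrame 2, v] → v = stdFrame 3 := by
    unfold IsFanoSimplex; decide
  rw [hQ'] at hQ ⊢
  rw [hfourth _ hQ]
  ext i : 1
  fin_cases i <;> rfl

lemma IsFanoSimplex.exists_addEquiv {P : Fin 4 → 𝕍} (hP : IsFanoSimplex P) :
    ∃ g : 𝕍 ≃+ 𝕍, ∀ i, g (stdFrame i) = P i := by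
  let b := basisOfLinearIndependentOfCardEqFinrank hP.linearIndependent (by simp)
  let g := ((Pi.basisFun (ZMod 2) (Fin 3)).equiv b (Equiv.refl _)).toAddEquiv
  have hg : ∀ i : Fin 3, g (stdFrame i.castSucc) = P i.castSucc := by
    intro i
    have := (Pi.basisFun (ZMod 2) (Fin 3)).equiv_apply i b (Equiv.refl _)
    fin_cases i <;> simpa [b, g, stdFrame] using this
  have hframe : g.symm ∘ P = stdFrame :=
    eq_stdFrame_of_isFanoSimplex (hP.addEquiv_comp g.symm) fun i => by simp [← hg i]
  refine ⟨g, fun i => ?_⟩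
  rw [← hframe]
  simp

def simplexCompl (P : Fin 4 → 𝕍) : Finset 𝕍 := fanoPoints \ {P 0, P 1, P 2, P 3}

lemma simplexCompl_eq_compl (P : Fin 4 → 𝕍) :
    simplexCompl P = (insert 0 {P 0, P 1, P 2, P 3})ᶜ := by
  ext v
  simp [simplexCompl, fanoPoints, and_comm]

lemma image_simplexCompl {P : Fin 4 → 𝕍} {δ : Equiv.Perm 𝕍} (hδ0 : δ 0 = 0)
    (hfix : ∀ i, δ (P i) = P i) : (simplexCompl P).image δ = simplexCompl P := by
  rw [simplexCompl_eq_compl]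
  exact image_compl_eq_of_forall_mem_fixed δ (by simp [hδ0, hfix])

lemma apply_eq_self_of_notMem_simplexCompl {P : Fin 4 → 𝕍} {δ : Equiv.Perm 𝕍} (hδ0 : δ 0 = 0)
    (hfix : ∀ i, δ (P i) = P i) {v : 𝕍} (hv : v ∉ simplexCompl P) : δ v = v := by
  rw [simplexCompl_eq_compl, notMem_compl] at hv
  simp only [mem_insert, mem_singleton] at hv
  rcases hv with rfl | rfl | rfl | rfl | rfl <;> simp [hδ0, hfix]

lemma simplexCompl_addEquiv_comp (g : 𝕍 ≃+ 𝕍) (P : Fin 4 → 𝕍) :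
    simplexCompl (g ∘ P) = (simplexCompl P).image g := by
  ext v
  obtain ⟨w, rfl⟩ := g.surjective v
  rw [g.injective.mem_finset_image]
  simp only [simplexCompl_eq_compl, mem_compl, mem_insert, mem_singleton, Function.comp_apply,
    AddEquiv.map_eq_zero_iff, g.injective.eq_iff]

lemma IsFanoSimplex.isFanoLine_simplexCompl {P : Fin 4 → 𝕍} (hP : IsFanoSimplex P) :
    IsFanoLine (simplexCompl P) := by
  obtain ⟨g, hg⟩ := hP.exists_addEquiv
  rw [show P = g ∘ stdFrame from funext fun i => (hg i).symm, simplexCompl_addEquiv_comp,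
    isFanoLine_image_addEquiv]
  decide

def stdLineUpdate (x y z : 𝕍) (v : 𝕍) : 𝕍 :=
  if v = ![1, 1, 0] then x else if v = ![1, 0, 1] then y else if v = ![0, 1, 1] then z else v

lemma fanoIndex_stdLineUpdate : ∀ x ∈ simplexCompl stdFrame, ∀ y ∈ simplexCompl stdFrame,
    ∀ z ∈ simplexCompl stdFrame, x ≠ y → x ≠ z → y ≠ z →
    #{M : Finset 𝕍 | IsFanoLine M ∧ IsFanoLine (M.image (stdLineUpdate x y z))} =
      1 + 2 * #{v ∈ simplexCompl stdFrame | stdLineUpdate x y z v = v} := by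
  decide

lemma fanoIndex_of_fixes_stdFrame {δ : Equiv.Perm 𝕍} (hδ0 : δ 0 = 0)
    (hfix : ∀ i, δ (stdFrame i) = stdFrame i) :
    fanoIndex δ = 1 + 2 * #{v ∈ simplexCompl stdFrame | δ v = v} := by
  have hcompl : simplexCompl stdFrame = {![1, 1, 0], ![1, 0, 1], ![0, 1, 1]} := by decide
  have hext : ⇑δ = stdLineUpdate (δ ![1, 1, 0]) (δ ![1, 0, 1]) (δ ![0, 1, 1]) := by
    funext v
    unfold stdLineUpdate
    split_ifs with h₁ h₂ h₃
    · rw [h₁]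
    · rw [h₂]
    · rw [h₃]
    · exact apply_eq_self_of_notMem_simplexCompl hδ0 hfix (by simp [hcompl, h₁, h₂, h₃])
  have hmem : ∀ v ∈ simplexCompl stdFrame, δ v ∈ simplexCompl stdFrame := fun v hv =>
    image_simplexCompl hδ0 hfix ▸ mem_image_of_mem δ hv
  unfold fanoIndex
  rw [hext]
  exact fanoIndex_stdLineUpdate _ (hmem _ (by decide)) _ (hmem _ (by decide)) _ (hmem _ (by decide))
    (δ.injective.ne (by decide)) (δ.injective.ne (by decide)) (δ.injective.ne (by decide))

lemma IsFanoSimplex.fanoIndex_eq {P : Fin 4 → 𝕍} (hP : IsFanoSimplex P) {δ : Equiv.Perm 𝕍}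
    (hδ0 : δ 0 = 0) (hfix : ∀ i, δ (P i) = P i) :
    fanoIndex δ = 1 + 2 * #{v ∈ simplexCompl P | δ v = v} := by
  obtain ⟨g, hg⟩ := hP.exists_addEquiv
  set δ' := g.toEquiv⁻¹ * δ * g.toEquiv
  have hδ'0 : δ' 0 = 0 := by simp [δ', hδ0]
  have hfix' : ∀ i, δ' (stdFrame i) = stdFrame i := by simp [δ', hg, hfix, AddEquiv.symm_apply_eq]
  rw [← fanoIndex_conj g δ, fanoIndex_of_fixes_stdFrame hδ'0 hfix',
    show P = g ∘ stdFrame from funext fun i => (hg i).symm, simplexCompl_addEquiv_comp,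
    filter_image, card_image_of_injective _ g.injective]
  congr 3
  ext v
  simp [δ', AddEquiv.symm_apply_eq]

lemma card_filter_apply_eq_self_of_swap {α : Type*} [DecidableEq α] {L : Finset α} {f : α → α}
    (hL : #L = 3) (h : ∃ a ∈ L, ∃ b ∈ L, a ≠ b ∧ f a = b ∧ f b = a ∧
      ∀ x ∈ L, x ≠ a → x ≠ b → f x = x) : #{x ∈ L | f x = x} = 1 := by
  obtain ⟨a, ha, b, hb, hab, hfa, hfb, hf⟩ := h
  have hfixed : {x ∈ L | f x = x} = L \ {a, b} := by
    ext x
    simp only [mem_filter, mem_sdiff, mem_insert, mem_singleton, not_or]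
    constructor
    · rintro ⟨hx, hfx⟩
      refine ⟨hx, ?_, ?_⟩ <;> rintro rfl
      exacts [hab (hfx.symm.trans hfa), hab (hfb.symm.trans hfx)]
    · rintro ⟨hx, hxa, hxb⟩
      exact ⟨hx, hf x hx hxa hxb⟩
  rw [hfixed, card_sdiff_of_subset (by simp [insert_subset_iff, ha, hb]), hL, card_pair hab]

theorem stmt_14 (P : Fin 4 → (Fin 3 → ZMod 2)) (hP : IsFanoSimplex P)
    (δ : Equiv.Perm (Fin 3 → ZMod 2)) (hδ0 : δ 0 = 0)
    (hfix : ∀ i, δ (P i) = P i) :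
    let L : Finset (Fin 3 → ZMod 2) :=
      fanoPoints \ {P 0, P 1, P 2, P 3}
    IsFanoLine L ∧ L.image δ = L ∧
    ((∀ x ∈ L, δ x = x) → δ = 1) ∧
    ((∃ a ∈ L, ∃ b ∈ L, a ≠ b ∧ δ a = b ∧ δ b = a ∧
        ∀ x ∈ L, x ≠ a → x ≠ b → δ x = x) → fanoIndex δ = 3) ∧
    ((∀ x ∈ L, δ x ≠ x) → fanoIndex δ = 1) := by
  intro L
  have hline : IsFanoLine L := hP.isFanoLine_simplexCompl
  have hindex : fanoIndex δ = 1 + 2 * #{v ∈ L | δ v = v} := hP.fanoIndex_eq hδ0 hfix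
  refine ⟨hline, image_simplexCompl hδ0 hfix, fun hid => ?_, fun hswap => ?_, fun hcycle => ?_⟩
  · refine Equiv.ext fun v => ?_
    by_cases hv : v ∈ L
    exacts [hid v hv, apply_eq_self_of_notMem_simplexCompl hδ0 hfix hv]
  · rw [hindex, card_filter_apply_eq_self_of_swap hline.1 hswap]
  · rw [hindex, filter_false_of_mem hcycle, card_empty]
end

section
/- For every bijective transformation δ of the Fano plane, the number of lines mapped by δ onto lines belongs to {0, 1, 3, 7}. -/
/-!
The lines of `PG(2,2)` are the sets `w^⊥ \ {0}` for the nonzero `w ∈ 𝔽₂³`, each line arising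
from exactly one `w`. A bijection `δ` fixing `0` maps a line onto a line iff `δ` sums to `0` over
it. As `δ` sums to `0` over all of `𝔽₂³`, its sum over `w^⊥ \ {0}` equals `∑ v, (w ⬝ᵥ v) • δ v`,
which is additive in `w`. Hence the preserved lines correspond to the nonzero elements of the
kernel of an additive map `𝔽₂³ → 𝔽₂³`; that kernel has order `2 ^ k` dividing `8`, so the index
is `2 ^ k - 1 ∈ {0, 1, 3, 7}`.
-/

open Finset

local notation "𝔽₂³" => Fin 3 → ZMod 2

lemma AddMonoidHom.card_filter_ne_zero_ker_add_one_dvd {G H : Type*} [AddGroup G] [Fintype G]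
    [DecidableEq G] [AddGroup H] [DecidableEq H] (f : G →+ H) :
    #(univ.filter fun x => x ≠ 0 ∧ f x = 0) + 1 ∣ Nat.card G := by
  have hker : #(univ.filter fun x => x ≠ 0 ∧ f x = 0) + 1 = Nat.card f.ker := by
    have hfilter :
        (univ.filter fun x => x ≠ 0 ∧ f x = 0) = (univ.filter fun x => f x = 0).erase 0 := by
      ext x; simp
    rw [hfilter, card_erase_add_one (by simp), ← Fintype.card_subtype, ← Nat.card_eq_fintype_card]
    rfl
  exact hker ▸ AddSubgroup.card_addSubgroup_dvd_card f.ker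

lemma mem_of_succ_dvd_eight {n : ℕ} (h : n + 1 ∣ 8) : n ∈ ({0, 1, 3, 7} : Finset ℕ) := by
  obtain ⟨k, hk, hn⟩ := (Nat.dvd_prime_pow Nat.prime_two (m := 3)).1 h
  interval_cases k <;> simp_all

def fanoLine (w : 𝔽₂³) : Finset 𝔽₂³ :=
  (univ.filter fun v => w ⬝ᵥ v = 0).erase 0

lemma filter_isFanoLine_eq_image_fanoLine :
    univ.filter IsFanoLine = fanoPoints.image fanoLine := by
  decide

lemma injOn_fanoLine : Set.InjOn fanoLine fanoPoints := by
  have : ∀ w ∈ fanoPoints, ∀ w' ∈ fanoPoints, fanoLine w = fanoLine w' → w = w' := by decide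
  exact fun w hw w' hw' => this w hw w' hw'

lemma sum_perm_eq_zero (δ : Equiv.Perm 𝔽₂³) : ∑ v, δ v = 0 :=
  (Equiv.sum_comp δ fun v => v).trans (by decide)

lemma isFanoLine_image_iff {δ : Equiv.Perm 𝔽₂³} (hδ0 : δ 0 = 0) {L : Finset 𝔽₂³}
    (hL : IsFanoLine L) : IsFanoLine (L.image δ) ↔ ∑ v ∈ L, δ v = 0 := by
  obtain ⟨hcard, h0, -⟩ := hL
  have h0' : (0 : 𝔽₂³) ∉ L.image δ := by
    rwa [← hδ0, δ.injective.mem_finset_image]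
  rw [IsFanoLine, card_image_of_injective _ δ.injective, sum_image fun _ _ _ _ h => δ.injective h]
  tauto

def fanoLineSum (δ : Equiv.Perm 𝔽₂³) : 𝔽₂³ →+ 𝔽₂³ :=
  AddMonoidHom.mk' (fun w => ∑ v, (w ⬝ᵥ v) • δ v) fun w w' => by
    simp only [add_dotProduct, add_smul, sum_add_distrib]

-- In characteristic 2 the indicator of `w ⬝ᵥ v = 0` is `1 + w ⬝ᵥ v`, and `δ` sums to `0`.
lemma fanoLineSum_apply {δ : Equiv.Perm 𝔽₂³} (hδ0 : δ 0 = 0) (w : 𝔽₂³) :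
    fanoLineSum δ w = ∑ v ∈ fanoLine w, δ v := by
  have hind : ∀ a : ZMod 2, (if a = 0 then 1 else 0) = 1 + a := by decide
  calc fanoLineSum δ w = ∑ v, δ v + ∑ v, (w ⬝ᵥ v) • δ v := by
        rw [sum_perm_eq_zero, zero_add]; rfl
    _ = ∑ v, (1 + w ⬝ᵥ v) • δ v := by simp only [add_smul, one_smul, sum_add_distrib]
    _ = ∑ v, if w ⬝ᵥ v = 0 then δ v else 0 := by
        simp only [← hind, ite_smul, one_smul, zero_smul]
    _ = ∑ v ∈ fanoLine w, δ v := by rw [fanoLine, sum_erase _ hδ0, sum_filter]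

lemma fanoIndex_eq_card_filter_fanoLineSum {δ : Equiv.Perm 𝔽₂³} (hδ0 : δ 0 = 0) :
    fanoIndex δ = #(univ.filter fun w => w ≠ 0 ∧ fanoLineSum δ w = 0) := by
  have hpreserved :
      fanoIndex δ = #((univ.filter IsFanoLine).filter fun L => ∑ v ∈ L, δ v = 0) := by
    rw [fanoIndex, filter_filter]
    congr 1
    exact filter_congr fun L _ => and_congr_right (isFanoLine_image_iff hδ0)
  rw [hpreserved, filter_isFanoLine_eq_image_fanoLine, filter_image,
    card_image_of_injOn (injOn_fanoLine.mono (filter_subset _ _)), fanoPoints, filter_filter]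
  simp only [fanoLineSum_apply hδ0]

theorem stmt_15 (δ : Equiv.Perm (Fin 3 → ZMod 2)) (hδ0 : δ 0 = 0) :
    fanoIndex δ ∈ ({0, 1, 3, 7} : Finset ℕ) := by
  apply mem_of_succ_dvd_eight
  rw [fanoIndex_eq_card_filter_fanoLineSum hδ0]
  simpa using (fanoLineSum δ).card_filter_ne_zero_ker_add_one_dvd
end
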